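/- arXiv:math/0402380 — 2 statements merged into one kernel-verified Lean document; each statement's English description precedes it below -/
import Mathlib

section
/- Let X be a smooth projective curve of genus g over an algebraically closed field of characteristic p > 2, with g > (1/2)(p-1)(p-2). Suppose W ⊂ B₁ is a subbundle of rank r ≤ (p-1)/2 with μ(W) ≥ g - 1, and suppose there exists a line subbundle U ⊂ W with μ(W) ≤ μ(U) + g(1 - 1/r) and deg(U) ≤ (2g-2)/p. Then we obtain a contradiction; hence no such W exists. -/
/-- Abstract data of vector bundles on a smooth projective curve over an algebraically
closed field. -/
structure CurveBundles where
  genus : ℕ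
  Bundle : Type
  deg : Bundle → ℤ
  rk : Bundle → ℕ
  Sub : Bundle → Bundle → Prop

def CurveBundles.slope (C : CurveBundles) (V : C.Bundle) : ℚ :=
  (C.deg V : ℚ) / (C.rk V : ℚ)

/-- On a curve of genus `g > (1/2)(p-1)(p-2)` in characteristic `p > 2`, a subbundle
`W ⊂ B₁` of rank `r ≤ (p-1)/2` with `μ(W) ≥ g-1`, admitting a line subbundle `U` with
`μ(W) ≤ μ(U) + g(1-1/r)` (Mukai–Sakai) and `deg(U) ≤ (2g-2)/p` (adjunction), yields a
contradiction. -/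
theorem no_destabilizing_subbundle (C : CurveBundles) (p : ℕ) (hp : p.Prime) (hp2 : 2 < p)
    (hg : ((p : ℚ) - 1) * ((p : ℚ) - 2) / 2 < (C.genus : ℚ))
    (B1 W U : C.Bundle)
    (hB1rk : C.rk B1 = p - 1) (hB1slope : C.slope B1 = (C.genus : ℚ) - 1)
    (hWB : C.Sub W B1) (r : ℕ) (hWr : C.rk W = r) (hr1 : 1 ≤ r) (hr2 : 2 * r ≤ p - 1)
    (hWslope : (C.genus : ℚ) - 1 ≤ C.slope W)
    (hUW : C.Sub U W) (hU : C.rk U = 1)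
    (hMS : C.slope W ≤ C.slope U + (C.genus : ℚ) * (1 - 1 / (r : ℚ)))
    (hadj : (C.deg U : ℚ) ≤ (2 * (C.genus : ℚ) - 2) / (p : ℚ)) :

    False := by
  have hp3 : (3:ℚ) ≤ (p:ℚ) := by exact_mod_cast hp2
  have hr : (1:ℚ) ≤ (r:ℚ) := by exact_mod_cast hr1
  have hr2' : 2*(r:ℚ) ≤ (p:ℚ) - 1 := by
    have h := (Nat.cast_le (α := ℚ)).2 hr2
    rw [Nat.cast_sub (by omega : 1 ≤ p)] at h
    push_cast at h
    linarith
  have hrpos : (0:ℚ) < (r:ℚ) := by linarith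
  have hppos : (0:ℚ) < (p:ℚ) := by linarith
  have hGpos : (0:ℚ) < (C.genus : ℚ) := by nlinarith
  have hU1 : C.slope U = (C.deg U : ℚ) := by
    simp [CurveBundles.slope, hU]
  have key : (C.genus:ℚ) - 1 ≤ (C.deg U:ℚ) + (C.genus:ℚ)*(1 - 1/(r:ℚ)) := by
    have h := hWslope.trans hMS
    rw [hU1] at h
    exact h
  have k2 : (r:ℚ)*((C.genus:ℚ)-1) ≤ (r:ℚ)*(C.deg U:ℚ) + (C.genus:ℚ)*((r:ℚ)-1) := by
    have h := mul_le_mul_of_nonneg_left key hrpos.le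
    have e : (r:ℚ)*((C.deg U:ℚ) + (C.genus:ℚ)*(1 - 1/(r:ℚ)))
        = (r:ℚ)*(C.deg U:ℚ) + (C.genus:ℚ)*((r:ℚ)-1) := by
      field_simp
    linarith [e ▸ h]
  have k3 : (p:ℚ)*(C.deg U:ℚ) ≤ 2*(C.genus:ℚ) - 2 := by
    rw [le_div_iff₀ hppos] at hadj
    linarith
  nlinarith [mul_le_mul_of_nonneg_left k2 hppos.le,
    mul_le_mul_of_nonneg_left k3 hrpos.le,
    mul_nonneg hGpos.le (by linarith : (0:ℚ) ≤ (p:ℚ) - 2*(r:ℚ) - 1),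
    mul_nonneg (by linarith : (0:ℚ) ≤ (p:ℚ) - 1 - 2*(r:ℚ)) (by linarith : (0:ℚ) ≤ (p:ℚ) - 2)]
end

section
/- Let X be a smooth projective curve of genus g ≤ 1 over an algebraically closed field of characteristic p > 2. Then B₁ is not stable: there exists a line subbundle M ⊂ B₁ with μ(M) ≥ g - 1 = μ(B₁). -/
/-- If `g ≤ 1` and `p > 2`, then `B₁` (rank `p-1`, slope `g-1`) is not stable: the line
subbundle `M` provided by Mukai–Sakai, with `μ(M) ≥ μ(B₁) - g(1 - 1/(p-1))`, in fact
satisfies `μ(M) ≥ g - 1 = μ(B₁)` (by integrality of `deg M`). -/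
theorem B1_not_stable_low_genus (C : CurveBundles) (p : ℕ) (hp : p.Prime) (hp2 : 2 < p)
    (hg : C.genus ≤ 1) (B1 : C.Bundle)
    (hrk : C.rk B1 = p - 1) (hslope : C.slope B1 = (C.genus : ℚ) - 1)
    (hMS : ∃ M : C.Bundle, C.Sub M B1 ∧ C.rk M = 1 ∧
      C.slope B1 - (C.genus : ℚ) * (1 - 1 / ((p : ℚ) - 1)) ≤ C.slope M) :
    ∃ M : C.Bundle, C.Sub M B1 ∧ C.rk M = 1 ∧ (C.genus : ℚ) - 1 ≤ C.slope M := by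
  obtain ⟨M, hsub, hrkM, hbd⟩ := hMS
  refine ⟨M, hsub, hrkM, ?_⟩
  have hsM : C.slope M = (C.deg M : ℚ) := by
    simp [CurveBundles.slope, hrkM]
  rw [hslope] at hbd
  interval_cases h : C.genus
  · push_cast at hbd ⊢
    linarith
  · -- genus = 1 case: slope M ≥ -1 + 1/(p-1) > -1, so deg M ≥ 0
    have hp1 : (1 : ℚ) < (p : ℚ) - 1 := by
      have : (3 : ℕ) ≤ p := hp2
      have : (3 : ℚ) ≤ (p : ℚ) := by exact_mod_cast this
      linarith
    have hpos : 0 < 1 / ((p : ℚ) - 1) := by positivity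
    have h1 : (-1 : ℚ) < C.slope M := by
      push_cast at hbd
      nlinarith
    rw [hsM] at h1 ⊢
    have h2 : (-1 : ℤ) < C.deg M := by exact_mod_cast h1
    have h3 : (0 : ℤ) ≤ C.deg M := by omega
    have h4 : (0 : ℚ) ≤ (C.deg M : ℚ) := by exact_mod_cast h3
    push_cast
    linarith
end
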